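/- Fix τ ∈ (0,1), a finite action set A, a probability mass function μ with μ(a) > 0, Q : A → ℝ, and let V_τ be the τ-expectile of Q under μ with Q(a) ≠ V_τ for all a. Define π(a) ∝ μ(a)·|τ − 𝟙(Q(a) < V_τ)|. Then ∑_a π(a)·Q(a) = V_τ, i.e., the τ-expectile equals the mean of Q under the reweighted implicit policy. -/

import Mathlib

/-!
Near `V_τ` no `Q a` crosses the threshold, so the expectile loss coincides there with the fixed
weighted quadratic `W ↦ ∑ μ a c a (Q a - W)²`, where `c a = |τ - 𝟙(Q a < V_τ)|`. That quadratic
therefore has a local minimum at `V_τ`, and its vanishing derivative says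
`∑ μ a c a (Q a - V_τ) = 0`: after normalisation by `Z = ∑ μ a c a`, the mean of `Q` is `V_τ`.
-/

open Filter Topology

noncomputable def expectileLoss {A : Type*} [Fintype A] (τ : ℝ) (μ Q : A → ℝ) (W : ℝ) : ℝ :=
  ∑ a, μ a * (|τ - if Q a < W then 1 else 0| * (Q a - W) ^ 2)

lemma abs_sub_ite_one_zero_pos {τ : ℝ} (h0 : τ ≠ 0) (h1 : τ ≠ 1) (p : Prop) [Decidable p] :
    0 < |τ - if p then 1 else 0| := by
  refine abs_pos.mpr (sub_ne_zero.mpr ?_)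
  split_ifs <;> assumption

lemma eventually_forall_lt_iff_of_ne {A : Type*} [Finite A] {Q : A → ℝ} {V : ℝ}
    (hQ : ∀ a, Q a ≠ V) : ∀ᶠ W in 𝓝 V, ∀ a, (Q a < W ↔ Q a < V) := by
  refine eventually_all.mpr fun a => ?_
  rcases (hQ a).lt_or_gt with hlt | hgt
  · filter_upwards [eventually_gt_nhds hlt] with W hW
    exact iff_of_true hW hlt
  · filter_upwards [eventually_lt_nhds hgt] with W hW
    exact iff_of_false hW.not_gt hgt.not_gt

lemma hasDerivAt_sum_mul_sub_sq {ι : Type*} (s : Finset ι) (w Q : ι → ℝ) (V : ℝ) :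
    HasDerivAt (fun W => ∑ a ∈ s, w a * (Q a - W) ^ 2) (∑ a ∈ s, -2 * w a * (Q a - V)) V := by
  refine HasDerivAt.fun_sum fun a _ => ?_
  refine ((((hasDerivAt_id' V).const_sub (Q a)).fun_pow 2).const_mul (w a)).congr_deriv ?_
  ring

lemma sum_mul_sub_eq_zero_of_isLocalMin {ι : Type*} {s : Finset ι} {w Q : ι → ℝ} {V : ℝ}
    (hmin : IsLocalMin (fun W => ∑ a ∈ s, w a * (Q a - W) ^ 2) V) :
    ∑ a ∈ s, w a * (Q a - V) = 0 := by
  have hderiv := hmin.hasDerivAt_eq_zero (hasDerivAt_sum_mul_sub_sq s w Q V)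
  simp only [mul_assoc, ← Finset.mul_sum] at hderiv
  linarith

theorem expectileLoss_first_order_condition {A : Type*} [Fintype A] {τ : ℝ} {μ Q : A → ℝ}
    {V : ℝ} (hmin : ∀ W, expectileLoss τ μ Q V ≤ expectileLoss τ μ Q W) (hQ : ∀ a, Q a ≠ V) :
    ∑ a, μ a * |τ - if Q a < V then 1 else 0| * (Q a - V) = 0 := by
  refine sum_mul_sub_eq_zero_of_isLocalMin ?_
  filter_upwards [eventually_forall_lt_iff_of_ne hQ] with W hW
  simpa only [expectileLoss, hW, mul_assoc] using hmin W

lemma sum_div_mul_eq_of_sum_mul_sub_eq_zero {ι : Type*} {s : Finset ι} {w Q : ι → ℝ} {V : ℝ}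
    (hfoc : ∑ a ∈ s, w a * (Q a - V) = 0) (hZ : ∑ a ∈ s, w a ≠ 0) :
    ∑ a ∈ s, w a / (∑ b ∈ s, w b) * Q a = V := by
  have hmean : ∑ a ∈ s, w a * Q a = V * ∑ a ∈ s, w a := by
    simp only [mul_sub, Finset.sum_sub_distrib, sub_eq_zero] at hfoc
    rw [hfoc, Finset.mul_sum]
    exact Finset.sum_congr rfl fun a _ => mul_comm _ _
  simp only [div_mul_eq_mul_div, ← Finset.sum_div, hmean]
  field_simp

theorem stmt_10_general {A : Type*} [Fintype A] [Nonempty A]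
    (τ : ℝ) (hτ : τ ∈ Set.Ioo (0 : ℝ) 1)
    (μ Q : A → ℝ) (hμpos : ∀ a, 0 < μ a)
    (Vτ : ℝ)
    (hVτ : ∀ W : ℝ,
      ∑ a, μ a * (|τ - if Q a < Vτ then 1 else 0| * (Q a - Vτ) ^ 2) ≤
      ∑ a, μ a * (|τ - if Q a < W then 1 else 0| * (Q a - W) ^ 2))
    (hQ : ∀ a, Q a ≠ Vτ)
    (Z : ℝ) (hZ : Z = ∑ a, μ a * |τ - if Q a < Vτ then 1 else 0|)
    (π : A → ℝ) (hπ : ∀ a, π a = μ a * |τ - if Q a < Vτ then 1 else 0| / Z) :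
    ∑ a, π a * Q a = Vτ := by
  subst hZ
  simp only [hπ]
  refine sum_div_mul_eq_of_sum_mul_sub_eq_zero (expectileLoss_first_order_condition hVτ hQ) ?_
  exact (Finset.sum_pos (fun a _ => mul_pos (hμpos a) (abs_sub_ite_one_zero_pos hτ.1.ne' hτ.2.ne _))
    Finset.univ_nonempty).ne'

theorem stmt_10 {A : Type*} [Fintype A] [Nonempty A]
    (τ : ℝ) (hτ : τ ∈ Set.Ioo (0 : ℝ) 1)
    (μ Q : A → ℝ) (hμpos : ∀ a, 0 < μ a) (hμsum : ∑ a, μ a = 1)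
    (Vτ : ℝ)
    (hVτ : ∀ W : ℝ,
      ∑ a, μ a * (|τ - if Q a < Vτ then 1 else 0| * (Q a - Vτ) ^ 2) ≤
      ∑ a, μ a * (|τ - if Q a < W then 1 else 0| * (Q a - W) ^ 2))
    (hQ : ∀ a, Q a ≠ Vτ)
    (Z : ℝ) (hZ : Z = ∑ a, μ a * |τ - if Q a < Vτ then 1 else 0|)
    (π : A → ℝ) (hπ : ∀ a, π a = μ a * |τ - if Q a < Vτ then 1 else 0| / Z) :
    ∑ a, π a * Q a = Vτ :=
  stmt_10_general τ hτ μ Q hμpos Vτ hVτ hQ Z hZ π hπ
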